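/- arXiv:2011.07866 — 2 statements merged into one kernel-verified Lean document; each statement's English description precedes it below -/
import Mathlib

section
/- Let Γ be a symmetric positive definite (n+p)×(n+p) real matrix written in block form Γ = [[Γ₁₁, Γ₁₂],[Γ₂₁, Γ₂₂]] with Γ₁₁ of size n×n and Γ₂₂ of size p×p, and let m₁ ∈ ℝ^n, m₂ ∈ ℝ^p. Then Γ₂₂ is symmetric positive definite, the Schur complement S := Γ₁₁ − Γ₁₂ Γ₂₂⁻¹ Γ₂₁ is symmetric positive definite, and for all x ∈ ℝ^n and y ∈ ℝ^p the joint Gaussian density factorizes as N((x, y); (m₁, m₂), Γ) = N(y; m₂, Γ₂₂) · N(x; m₁ + Γ₁₂ Γ₂₂⁻¹ (y − m₂), S), where (x, y) ∈ ℝ^{n+p} denotes the concatenated vector. -/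
open Matrix

/-- The multivariate Gaussian density `N(x; m, S)` with respect to Lebesgue measure. -/
noncomputable def gaussDensity {ι : Type*} [Fintype ι] [DecidableEq ι]
    (m : ι → ℝ) (S : Matrix ι ι ℝ) (x : ι → ℝ) : ℝ :=
  (2 * Real.pi) ^ (-(Fintype.card ι : ℝ) / 2) * S.det ^ (-(1 : ℝ) / 2) *
    Real.exp (-(1 / 2) * ((x - m) ⬝ᵥ (S⁻¹ *ᵥ (x - m))))

/-- Gaussian conditioning: for a positive definite block matrix `Γ`, the bottom-right
block `Γ₂₂` and the Schur complement `S = Γ₁₁ − Γ₁₂ Γ₂₂⁻¹ Γ₂₁` are positive definite,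
and the joint density factorizes as
`N((x,y); (m₁,m₂), Γ) = N(y; m₂, Γ₂₂) · N(x; m₁ + Γ₁₂ Γ₂₂⁻¹ (y − m₂), S)`. -/
theorem gaussian_conditioning {n p : ℕ}
    (Γ11 : Matrix (Fin n) (Fin n) ℝ) (Γ12 : Matrix (Fin n) (Fin p) ℝ)
    (Γ21 : Matrix (Fin p) (Fin n) ℝ) (Γ22 : Matrix (Fin p) (Fin p) ℝ)
    (m1 : Fin n → ℝ) (m2 : Fin p → ℝ)
    (hΓ : (Matrix.fromBlocks Γ11 Γ12 Γ21 Γ22).PosDef) :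
    Γ22.PosDef ∧ (Γ11 - Γ12 * Γ22⁻¹ * Γ21).PosDef ∧
    ∀ (x : Fin n → ℝ) (y : Fin p → ℝ),
      gaussDensity (Sum.elim m1 m2) (Matrix.fromBlocks Γ11 Γ12 Γ21 Γ22) (Sum.elim x y)
        = gaussDensity m2 Γ22 y *
          gaussDensity (m1 + Γ12 *ᵥ (Γ22⁻¹ *ᵥ (y - m2))) (Γ11 - Γ12 * Γ22⁻¹ * Γ21) x := by
  obtain ⟨hH, hq⟩ := id hΓ
  obtain ⟨h11, h12, h21, h22⟩ := Matrix.isHermitian_fromBlocks_iff.mp hH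
  subst h12
  -- positive definiteness of Γ22
  have hD : Γ22.PosDef := by
    refine Matrix.PosDef.of_dotProduct_mulVec_pos h22 fun v hv => ?_
    have h0 : (Sum.elim (0 : Fin n → ℝ) v) ≠ 0 :=
      fun h => hv (funext fun i => congrFun h (Sum.inr i))
    have := hΓ.dotProduct_mulVec_pos h0
    simpa [fromBlocks_mulVec, sumElim_dotProduct_sumElim] using this
  haveI : Invertible Γ22 := hD.isUnit.invertible
  -- positive definiteness of the Schur complement
  have hSH : (Γ11 - Γ12 * Γ22⁻¹ * Γ12ᴴ).IsHermitian :=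
    (Matrix.IsHermitian.fromBlocks₂₂ Γ11 Γ12 h22).mp hH
  have hS : (Γ11 - Γ12 * Γ22⁻¹ * Γ12ᴴ).PosDef := by
    refine Matrix.PosDef.of_dotProduct_mulVec_pos hSH fun x hx => ?_
    have h0 : Sum.elim x (-((Γ22⁻¹ * Γ12ᴴ) *ᵥ x)) ≠ 0 :=
      fun h => hx (funext fun i => congrFun h (Sum.inl i))
    have := hΓ.dotProduct_mulVec_pos h0
    rw [dotProduct_mulVec, Matrix.schur_complement_eq₂₂ Γ11 Γ12 _ _ h22] at this
    simpa [dotProduct_mulVec] using this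
  haveI : Invertible (Γ11 - Γ12 * Γ22⁻¹ * Γ12ᴴ) := hS.isUnit.invertible
  refine ⟨hD, hS, fun x y => ?_⟩
  set S := Γ11 - Γ12 * Γ22⁻¹ * Γ12ᴴ with hSdef
  set u := x - m1 with hu
  set v := y - m2 with hvdef
  set w := u - Γ12 *ᵥ (Γ22⁻¹ *ᵥ v) with hwdef
  set a := S⁻¹ *ᵥ w with ha
  set b := Γ22⁻¹ *ᵥ v - Γ22⁻¹ *ᵥ (Γ12ᴴ *ᵥ a) with hb
  have hGa : (fromBlocks Γ11 Γ12 Γ12ᴴ Γ22) *ᵥ Sum.elim a b = Sum.elim u v := by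
    rw [fromBlocks_mulVec]
    have e2 : S *ᵥ a = w := by
      rw [ha, mulVec_mulVec, mul_inv_of_invertible, one_mulVec]
    have e3 : Γ22 *ᵥ (Γ22⁻¹ *ᵥ v) = v := by
      rw [mulVec_mulVec, mul_inv_of_invertible, one_mulVec]
    have e4 : Γ22 *ᵥ (Γ22⁻¹ *ᵥ (Γ12ᴴ *ᵥ a)) = Γ12ᴴ *ᵥ a := by
      rw [mulVec_mulVec, mul_inv_of_invertible, one_mulVec]
    have e1 : Γ11 *ᵥ a + Γ12 *ᵥ b = u := by
      rw [hb, mulVec_sub]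
      have : Γ12 *ᵥ (Γ22⁻¹ *ᵥ (Γ12ᴴ *ᵥ a)) = (Γ12 * Γ22⁻¹ * Γ12ᴴ) *ᵥ a := by
        rw [mulVec_mulVec, mulVec_mulVec, Matrix.mul_assoc]
      rw [this]
      have : Γ11 *ᵥ a - (Γ12 * Γ22⁻¹ * Γ12ᴴ) *ᵥ a = S *ᵥ a := by
        rw [hSdef, sub_mulVec]
      have hw' : Γ11 *ᵥ a + (Γ12 *ᵥ (Γ22⁻¹ *ᵥ v) - (Γ12 * Γ22⁻¹ * Γ12ᴴ) *ᵥ a)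
          = S *ᵥ a + Γ12 *ᵥ (Γ22⁻¹ *ᵥ v) := by rw [← this]; abel
      rw [hw', e2, hwdef]; abel
    have e5 : Γ12ᴴ *ᵥ a + Γ22 *ᵥ b = v := by
      rw [hb, mulVec_sub, e3, e4]; abel
    simp only [Sum.elim_comp_inl, Sum.elim_comp_inr, e1, e5]
  have hinv : (fromBlocks Γ11 Γ12 Γ12ᴴ Γ22)⁻¹ *ᵥ Sum.elim u v = Sum.elim a b := by
    rw [← hGa, mulVec_mulVec, Matrix.nonsing_inv_mul _ hΓ.det_pos.ne'.isUnit, one_mulVec]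
  -- key symmetry fact
  have hsymm : v ⬝ᵥ (Γ22⁻¹ *ᵥ (Γ12ᴴ *ᵥ a)) = (Γ12 *ᵥ (Γ22⁻¹ *ᵥ v)) ⬝ᵥ a := by
    have ht : (Γ22⁻¹ * Γ12ᴴ)ᵀ = Γ12 * Γ22⁻¹ := by
      rw [transpose_mul, transpose_nonsing_inv,
        ← conjTranspose_eq_transpose_of_trivial, ← conjTranspose_eq_transpose_of_trivial,
        conjTranspose_conjTranspose, h22.eq]
    rw [mulVec_mulVec, dotProduct_mulVec, ← mulVec_transpose, ht, mulVec_mulVec]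
  -- quadratic form identity
  have hq2 : Sum.elim u v ⬝ᵥ ((fromBlocks Γ11 Γ12 Γ12ᴴ Γ22)⁻¹ *ᵥ Sum.elim u v)
      = v ⬝ᵥ (Γ22⁻¹ *ᵥ v) + w ⬝ᵥ (S⁻¹ *ᵥ w) := by
    rw [hinv, sumElim_dotProduct_sumElim, ← ha, hb, hwdef]
    rw [dotProduct_sub, hsymm]
    simp only [sub_dotProduct, add_dotProduct, neg_dotProduct]
    ring
  -- determinant factorization
  have hdet : (fromBlocks Γ11 Γ12 Γ12ᴴ Γ22).det = Γ22.det * S.det := by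
    rw [Matrix.det_fromBlocks₂₂, invOf_eq_nonsing_inv]
  have hsum : Sum.elim x y - Sum.elim m1 m2 = Sum.elim u v := by
    ext (i | i) <;> simp [hu, hvdef]
  have hwx : x - (m1 + Γ12 *ᵥ (Γ22⁻¹ *ᵥ (y - m2))) = w := by
    rw [hwdef, hu, hvdef]; abel
  simp only [gaussDensity, hsum, hq2, hdet, hwx, Fintype.card_sum, Fintype.card_fin]
  rw [Real.mul_rpow hD.det_pos.le hS.det_pos.le, mul_add, Real.exp_add,
    show (-(↑(n + p) : ℝ) / 2) = (-(p : ℝ) / 2) + (-(n : ℝ) / 2) by push_cast; ring,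
    Real.rpow_add (by positivity)]
  rw [show x - (m1 + Γ12 *ᵥ (Γ22⁻¹ *ᵥ v)) = w from hwx]
  ring
end

section
/- Fix K ≥ 1 and, for each k ∈ {1,…,K}, a vector m̂_k ∈ ℝ^N, a symmetric positive definite N×N matrix Ĉ_k, and a mixing proportion π_k > 0. Let y ∈ ℝ^n be an observation at a sub-grid given by an injective map σ : Fin n → Fin N, and let Ψ be a symmetric positive definite n×n matrix. Then for every k: exp( ∫ log(π_k · N(y; μ∘σ, Ψ)) d𝒩(m̂_k, Ĉ_k)(μ) ) = π_k · N(y; m̂_k∘σ, Ψ) · exp(−(1/2) tr((Ĉ_k)_{σσ} Ψ⁻¹)), and consequently the normalized exponentiated variational expectations equal the E-step responsibilities: exp(∫ log(π_k N(y; μ∘σ, Ψ)) d𝒩(m̂_k,Ĉ_k)(μ)) / Σ_{l=1}^K exp(∫ log(π_l N(y; μ∘σ, Ψ)) d𝒩(m̂_l,Ĉ_l)(μ)) = π_k N(y; m̂_k∘σ, Ψ) exp(−(1/2) tr((Ĉ_k)_{σσ} Ψ⁻¹)) / Σ_{l=1}^K π_l N(y; m̂_l∘σ, Ψ) exp(−(1/2)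 tr((Ĉ_l)_{σσ} Ψ⁻¹)). -/
open MeasureTheory Matrix

/-- The multivariate Gaussian probability measure `𝒩(m, S)` on `ℝ^N`. -/
noncomputable def gaussMeasure {N : ℕ} (m : Fin N → ℝ) (S : Matrix (Fin N) (Fin N) ℝ) :
    Measure (Fin N → ℝ) :=
  volume.withDensity (fun x => ENNReal.ofReal (gaussDensity m S x))


noncomputable def stdg (t : ℝ) : ℝ := (2 * Real.pi) ^ (-(1:ℝ)/2) * Real.exp (-(1/2) * t ^ 2)

lemma c1_pos : 0 < (2 * Real.pi) ^ (-(1:ℝ)/2 : ℝ) := Real.rpow_pos_of_pos (by positivity) _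

lemma integrable_exp_half : Integrable (fun t : ℝ => Real.exp (-(1/2) * t ^ 2)) :=
  integrable_exp_neg_mul_sq (by norm_num)

lemma integral_exp_half : ∫ t : ℝ, Real.exp (-(1/2) * t ^ 2) = Real.sqrt (2 * Real.pi) := by
  have := integral_gaussian (1/2)
  simp only [neg_mul] at this ⊢
  rw [this, show Real.pi / (1/2) = 2 * Real.pi by ring]

lemma c1_mul_sqrt : ((2 * Real.pi) ^ (-(1:ℝ)/2 : ℝ)) * Real.sqrt (2 * Real.pi) = 1 := by
  rw [Real.sqrt_eq_rpow, ← Real.rpow_add (by positivity)]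
  norm_num

lemma integrable_stdg : Integrable stdg := integrable_exp_half.const_mul _

lemma integral_stdg : ∫ t, stdg t = 1 := by
  unfold stdg
  rw [integral_const_mul, integral_exp_half, c1_mul_sqrt]

lemma integrable_mul_exp_half : Integrable (fun t : ℝ => t * Real.exp (-(1/2) * t ^ 2)) :=
  integrable_mul_exp_neg_mul_sq (by norm_num)

lemma integrable_t_stdg : Integrable (fun t : ℝ => t * stdg t) := by
  have := integrable_mul_exp_half.const_mul ((2 * Real.pi) ^ (-(1:ℝ)/2 : ℝ))
  refine this.congr (Filter.Eventually.of_forall fun t => ?_)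
  unfold stdg; ring

lemma integral_t_stdg : ∫ t, t * stdg t = 0 := by
  have h := MeasureTheory.integral_neg_eq_self (fun t : ℝ => t * stdg t) volume
  have hodd : ∀ t : ℝ, (-t) * stdg (-t) = -(t * stdg t) := by
    intro t; unfold stdg; ring_nf
  simp only [hodd, integral_neg] at h
  linarith

lemma integrable_sq_exp_half : Integrable (fun t : ℝ => t ^ 2 * Real.exp (-(1/2) * t ^ 2)) := by
  have h := integrable_rpow_mul_exp_neg_mul_sq (b := 1/2) (by norm_num) (s := ((2:ℕ):ℝ)) (by norm_num)
  simpa [Real.rpow_natCast] using h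

lemma integral_sq_exp_half : ∫ t : ℝ, t ^ 2 * Real.exp (-(1/2) * t ^ 2) = Real.sqrt (2 * Real.pi) := by
  have hu : ∀ x : ℝ, HasDerivAt (fun x : ℝ => x) 1 x := fun x => hasDerivAt_id x
  have hv : ∀ x : ℝ, HasDerivAt (fun x : ℝ => -Real.exp (-(1/2) * x ^ 2))
      (x * Real.exp (-(1/2) * x ^ 2)) x := by
    intro x
    have hinner : HasDerivAt (fun x : ℝ => -(1/2) * x ^ 2) (-(1/2) * (2 * x)) x := by
      have := (hasDerivAt_pow 2 x).const_mul (-(1/2) : ℝ)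
      exact this.congr_deriv (by norm_num)
    have := ((hinner.exp).neg)
    exact this.congr_deriv (by ring)
  have h := MeasureTheory.integral_mul_deriv_eq_deriv_mul_of_integrable (fun x _ => hu x) (fun x _ => hv x)
    ?_ ?_ ?_
  · have h1 : ∫ x : ℝ, x * (x * Real.exp (-(1/2) * x ^ 2))
        = ∫ x : ℝ, x ^ 2 * Real.exp (-(1/2) * x ^ 2) := by
      congr 1; funext x; ring
    rw [h1] at h
    rw [h]
    simp only [one_mul, integral_neg, neg_neg]
    exact integral_exp_half
  · refine integrable_sq_exp_half.congr (Filter.Eventually.of_forall fun t => ?_)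
    simp only [Pi.mul_apply]; ring
  · refine integrable_exp_half.neg.congr (Filter.Eventually.of_forall fun t => ?_)
    simp [Pi.mul_apply]
  · refine integrable_mul_exp_half.neg.congr (Filter.Eventually.of_forall fun t => ?_)
    simp only [Pi.mul_apply, Pi.neg_apply]; ring

lemma integral_t2_stdg : ∫ t, t * (t * stdg t) = 1 := by
  have : ∀ t : ℝ, t * (t * stdg t) = ((2 * Real.pi) ^ (-(1:ℝ)/2 : ℝ)) * (t ^ 2 * Real.exp (-(1/2) * t ^ 2)) := by
    intro t; unfold stdg; ring
  simp only [this]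
  rw [integral_const_mul, integral_sq_exp_half, c1_mul_sqrt]

lemma integrable_t2_stdg : Integrable (fun t : ℝ => t * (t * stdg t)) := by
  have := integrable_sq_exp_half.const_mul ((2 * Real.pi) ^ (-(1:ℝ)/2 : ℝ))
  refine this.congr (Filter.Eventually.of_forall fun t => ?_)
  unfold stdg; ring
section Moments
variable {ι : Type*} [Fintype ι] [DecidableEq ι]

noncomputable def stdphi (v : ι → ℝ) : ℝ := ∏ i, stdg (v i)

lemma integrable_stdphi : Integrable (stdphi (ι := ι)) :=
  Integrable.fintype_prod (fun _ => integrable_stdg)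

lemma integral_stdphi : ∫ v : ι → ℝ, stdphi v = 1 := by
  rw [show (fun v : ι → ℝ => stdphi v) = fun v => ∏ i, stdg (v i) from rfl,
    integral_fintype_prod_volume_eq_prod (fun _ => stdg)]
  simp [integral_stdg]

noncomputable def Fp (p : ι) : ι → ℝ → ℝ := fun k t => (if k = p then t else 1) * stdg t

lemma Fp_prod (p : ι) (v : ι → ℝ) : (∏ k, Fp p k (v k)) = v p * stdphi v := by
  unfold Fp stdphi
  rw [Finset.prod_mul_distrib]
  congr 1
  simp

lemma integrable_Fp (p k : ι) : Integrable (Fp p k) := by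
  unfold Fp
  by_cases h : k = p
  · simp only [h, if_pos rfl]; exact integrable_t_stdg
  · simp only [if_neg h, one_mul]; exact integrable_stdg

lemma integrable_vp_phi (p : ι) : Integrable (fun v : ι → ℝ => v p * stdphi v) := by
  refine (Integrable.fintype_prod (f := Fp p) (integrable_Fp p)).congr
    (Filter.Eventually.of_forall fun v => Fp_prod p v)

lemma integral_vp_phi (p : ι) : ∫ v : ι → ℝ, v p * stdphi v = 0 := by
  rw [show (fun v : ι → ℝ => v p * stdphi v) = fun v => ∏ k, Fp p k (v k) by
      funext v; rw [Fp_prod]]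
  rw [integral_fintype_prod_volume_eq_prod (Fp p)]
  refine Finset.prod_eq_zero (Finset.mem_univ p) ?_
  simp [Fp, integral_t_stdg]

noncomputable def Gpq (p q : ι) : ι → ℝ → ℝ :=
  fun k t => (if k = p then t else 1) * ((if k = q then t else 1) * stdg t)

lemma Gpq_prod (p q : ι) (v : ι → ℝ) :
    (∏ k, Gpq p q k (v k)) = v p * (v q * stdphi v) := by
  unfold Gpq stdphi
  rw [Finset.prod_mul_distrib, Finset.prod_mul_distrib]
  simp [mul_assoc]

lemma integrable_Gpq (p q k : ι) : Integrable (Gpq p q k) := by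
  unfold Gpq
  by_cases h1 : k = p
  · subst h1
    by_cases h2 : k = q
    · subst h2; simp only [if_pos rfl]; exact integrable_t2_stdg
    · simp only [if_pos rfl, if_neg h2, one_mul]; exact integrable_t_stdg
  · by_cases h2 : k = q
    · subst h2
      rw [show (fun t : ℝ => (if k = p then t else 1) * ((if k = k then t else 1) * stdg t))
          = fun t : ℝ => t * stdg t by funext t; rw [if_neg h1, if_pos rfl]; ring]
      exact integrable_t_stdg
    · simp only [if_neg h1, if_neg h2, one_mul]; exact integrable_stdg

lemma integrable_vpq_phi (p q : ι) :
    Integrable (fun v : ι → ℝ => v p * (v q * stdphi v)) := by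
  refine (Integrable.fintype_prod (f := Gpq p q) (integrable_Gpq p q)).congr
    (Filter.Eventually.of_forall fun v => Gpq_prod p q v)

lemma integral_vpq_phi (p q : ι) :
    ∫ v : ι → ℝ, v p * (v q * stdphi v) = if p = q then 1 else 0 := by
  rw [show (fun v : ι → ℝ => v p * (v q * stdphi v)) = fun v => ∏ k, Gpq p q k (v k) by
      funext v; rw [Gpq_prod]]
  rw [integral_fintype_prod_volume_eq_prod (Gpq p q)]
  by_cases h : p = q
  · subst h
    rw [if_pos rfl]
    refine Finset.prod_eq_one fun k _ => ?_
    unfold Gpq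
    by_cases hk : k = p
    · subst hk; simp only [if_pos rfl]; exact integral_t2_stdg
    · simp only [if_neg hk, one_mul]; exact integral_stdg
  · rw [if_neg h]
    refine Finset.prod_eq_zero (Finset.mem_univ p) ?_
    unfold Gpq
    rw [show (fun t : ℝ => (if p = p then t else 1) * ((if p = q then t else 1) * stdg t))
        = fun t : ℝ => t * stdg t by
      funext t; rw [if_pos rfl, if_neg h]; ring]
    exact integral_t_stdg

end Moments

section CoV

lemma continuous_gaussDensity {ι : Type*} [Fintype ι] [DecidableEq ι]
    (m : ι → ℝ) (S : Matrix ι ι ℝ) : Continuous (gaussDensity m S) := by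
  unfold gaussDensity
  refine continuous_const.mul ?_
  refine Real.continuous_exp.comp ?_
  refine continuous_const.mul ?_
  unfold dotProduct mulVec dotProduct
  refine continuous_finset_sum _ fun i _ => ?_
  refine (((continuous_apply i).sub continuous_const)).mul ?_
  exact continuous_finset_sum _ fun j _ =>
    continuous_const.mul ((continuous_apply j).sub continuous_const)

lemma gaussDensity_nonneg {ι : Type*} [Fintype ι] [DecidableEq ι]
    {m : ι → ℝ} {S : Matrix ι ι ℝ} (hS : 0 ≤ S.det) (x : ι → ℝ) :
    0 ≤ gaussDensity m S x := by
  unfold gaussDensity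
  have h1 : (0:ℝ) < 2 * Real.pi := by positivity
  positivity

lemma integral_comp_mulVec {J : ℕ} {L : Matrix (Fin J) (Fin J) ℝ} (hL : L.det ≠ 0)
    (h : (Fin J → ℝ) → ℝ) : ∫ x, h x = |L.det| * ∫ v, h (L *ᵥ v) := by
  have hinv : Invertible L := L.invertibleOfIsUnitDet hL.isUnit
  let e₁ : (Fin J → ℝ) ≃ₗ[ℝ] (Fin J → ℝ) := L.toLinearEquiv' hinv
  let e : (Fin J → ℝ) ≃ᵐ (Fin J → ℝ) :=
    e₁.toContinuousLinearEquiv.toHomeomorph.toMeasurableEquiv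
  have hcoe : (⇑e : (Fin J → ℝ) → (Fin J → ℝ)) = ⇑(Matrix.toLin' L) := rfl
  have hmap : Measure.map (⇑e) volume = ENNReal.ofReal |L.det|⁻¹ • volume := by
    rw [hcoe]
    have := Real.map_matrix_volume_pi_eq_smul_volume_pi hL
    rwa [abs_inv] at this
  have h1 : ∫ v, h (e v) = |L.det|⁻¹ * ∫ x, h x := by
    rw [← MeasureTheory.integral_map_equiv e h, hmap, integral_smul_measure,
      ENNReal.toReal_ofReal (inv_nonneg.mpr (abs_nonneg _)), smul_eq_mul]
  have h2 : (fun v => h (L *ᵥ v)) = fun v => h (e v) := by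
    funext v
    have hev : e v = L *ᵥ v := Matrix.toLin'_apply L v
    rw [hev]
  rw [h2, h1]
  have : |L.det| ≠ 0 := abs_ne_zero.mpr hL
  field_simp

end CoV

section GaussCov

open scoped MatrixOrder in
noncomputable def Matrix.PosSemidef.sqrt {ι : Type*} [Fintype ι] [DecidableEq ι]
    {A : Matrix ι ι ℝ} (_hA : A.PosSemidef) : Matrix ι ι ℝ := CFC.sqrt A

open scoped MatrixOrder in
lemma Matrix.PosSemidef.sqrt_mul_self {ι : Type*} [Fintype ι] [DecidableEq ι]
    {A : Matrix ι ι ℝ} (hA : A.PosSemidef) : hA.sqrt * hA.sqrt = A :=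
  CFC.sqrt_mul_sqrt_self A hA.nonneg

open scoped MatrixOrder in
lemma Matrix.PosSemidef.posSemidef_sqrt {ι : Type*} [Fintype ι] [DecidableEq ι]
    {A : Matrix ι ι ℝ} (hA : A.PosSemidef) : hA.sqrt.PosSemidef :=
  (CFC.sqrt_nonneg A).posSemidef

variable {J : ℕ}

lemma gauss_cov {C : Matrix (Fin J) (Fin J) ℝ} (hC : C.PosDef) (m : Fin J → ℝ)
    (f : (Fin J → ℝ) → ℝ) :
    ∫ x, f x ∂(gaussMeasure m C) =
      ∫ v, stdphi v * f (m + hC.posSemidef.sqrt *ᵥ v) := by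
  set L := hC.posSemidef.sqrt with hLdef
  have hLL : L * L = C := hC.posSemidef.sqrt_mul_self
  have hLsym : Lᵀ = L := by
    have h := hC.posSemidef.posSemidef_sqrt.1
    exact (by simpa using h : L.IsSymm)
  have hdetL : L.det * L.det = C.det := by rw [← Matrix.det_mul, hLL]
  have hLdet_ne : L.det ≠ 0 := by
    intro h
    exact hC.det_pos.ne' (by rw [← hdetL, h, zero_mul])
  -- step 1 : withDensity
  have hmeas : Measurable fun x => (gaussDensity m C x).toNNReal :=
    (continuous_gaussDensity m C).measurable.real_toNNReal
  have step1 : ∫ x, f x ∂(gaussMeasure m C) = ∫ x, gaussDensity m C x * f x := by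
    have hgm : gaussMeasure m C
        = volume.withDensity (fun x => ((gaussDensity m C x).toNNReal : ENNReal)) := rfl
    rw [hgm, integral_withDensity_eq_integral_smul hmeas f]
    congr 1
    funext x
    rw [NNReal.smul_def, Real.coe_toNNReal _ (gaussDensity_nonneg hC.det_pos.le x),
      smul_eq_mul]
  -- step 2 : translation
  have step2 : ∫ x, gaussDensity m C x * f x
      = ∫ v, gaussDensity m C (m + v) * f (m + v) :=
    (integral_add_left_eq_self (fun x => gaussDensity m C x * f x) m).symm
  -- step 3 : linear change of variables
  have step3 : ∫ v, gaussDensity m C (m + v) * f (m + v)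
      = |L.det| * ∫ v, gaussDensity m C (m + L *ᵥ v) * f (m + L *ᵥ v) :=
    integral_comp_mulVec hLdet_ne _
  -- density identity
  have hkey : Lᵀ * (C⁻¹ * L) = 1 := by
    have hC' : C⁻¹ = L⁻¹ * L⁻¹ := by rw [← hLL, Matrix.mul_inv_rev]
    rw [hLsym, hC', Matrix.mul_assoc L⁻¹ L⁻¹ L, Matrix.nonsing_inv_mul L hLdet_ne.isUnit,
      Matrix.mul_one, Matrix.mul_nonsing_inv L hLdet_ne.isUnit]
  have hquad : ∀ v : Fin J → ℝ, (L *ᵥ v) ⬝ᵥ (C⁻¹ *ᵥ (L *ᵥ v)) = v ⬝ᵥ v := by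
    intro v
    calc (L *ᵥ v) ⬝ᵥ (C⁻¹ *ᵥ (L *ᵥ v))
        = (L *ᵥ v) ⬝ᵥ ((C⁻¹ * L) *ᵥ v) := by rw [Matrix.mulVec_mulVec]
      _ = (v ᵥ* Lᵀ) ⬝ᵥ ((C⁻¹ * L) *ᵥ v) := by rw [Matrix.vecMul_transpose]
      _ = ((v ᵥ* Lᵀ) ᵥ* (C⁻¹ * L)) ⬝ᵥ v := by rw [Matrix.dotProduct_mulVec]
      _ = (v ᵥ* (Lᵀ * (C⁻¹ * L))) ⬝ᵥ v := by rw [Matrix.vecMul_vecMul]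
      _ = v ⬝ᵥ v := by rw [hkey, Matrix.vecMul_one]
  have hconst : C.det ^ (-(1:ℝ)/2 : ℝ) = |L.det|⁻¹ := by
    rw [← hdetL, ← abs_mul_abs_self L.det, ← pow_two,
      ← Real.rpow_natCast |L.det| 2, ← Real.rpow_mul (abs_nonneg _)]
    norm_num [Real.rpow_neg_one]
  have hprod : ∀ v : Fin J → ℝ,
      stdphi v = (2 * Real.pi) ^ (-(J:ℝ)/2 : ℝ) * Real.exp (-(1/2) * (v ⬝ᵥ v)) := by
    intro v
    unfold stdphi stdg
    rw [Finset.prod_mul_distrib, Finset.prod_const, ← Real.exp_sum]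
    congr 1
    · rw [Finset.card_univ, Fintype.card_fin, ← Real.rpow_natCast ((2*Real.pi) ^ (-(1:ℝ)/2 : ℝ)) J,
        ← Real.rpow_mul (by positivity : (0:ℝ) ≤ 2 * Real.pi)]
      congr 1
      ring
    · rw [← Finset.mul_sum]
      unfold dotProduct
      exact congrArg Real.exp (congrArg (fun t => (-(1/2) : ℝ) * t)
        (Finset.sum_congr rfl fun i _ => pow_two (v i)))
  have hdens : ∀ v : Fin J → ℝ,
      |L.det| * gaussDensity m C (m + L *ᵥ v) = stdphi v := by
    intro v
    unfold gaussDensity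
    rw [add_sub_cancel_left, hquad v, hprod v, hconst]
    rw [Fintype.card_fin]
    have : |L.det| ≠ 0 := abs_ne_zero.mpr hLdet_ne
    field_simp
  rw [step1, step2, step3, ← integral_const_mul]
  congr 1
  funext v
  rw [← mul_assoc, hdens v]

end GaussCov

section LinQuad

variable {J : ℕ}

lemma phi_dot_expand (c : Fin J → ℝ) :
    (fun v : Fin J → ℝ => stdphi v * (c ⬝ᵥ v))
      = fun v => ∑ p, c p * (v p * stdphi v) := by
  funext v
  unfold dotProduct
  rw [Finset.mul_sum]
  exact Finset.sum_congr rfl fun p _ => by ring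

lemma integrable_phi_dot (c : Fin J → ℝ) :
    Integrable (fun v : Fin J → ℝ => stdphi v * (c ⬝ᵥ v)) := by
  rw [phi_dot_expand]
  exact integrable_finset_sum _ fun p _ => (integrable_vp_phi p).const_mul (c p)

lemma integral_phi_dot (c : Fin J → ℝ) :
    ∫ v : Fin J → ℝ, stdphi v * (c ⬝ᵥ v) = 0 := by
  rw [phi_dot_expand, integral_finset_sum _
    (fun p _ => (integrable_vp_phi p).const_mul (c p))]
  refine Finset.sum_eq_zero fun p _ => ?_
  rw [integral_const_mul, integral_vp_phi, mul_zero]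

lemma phi_quad_expand (M : Matrix (Fin J) (Fin J) ℝ) :
    (fun v : Fin J → ℝ => stdphi v * (v ⬝ᵥ (M *ᵥ v)))
      = fun v => ∑ p, ∑ q, M p q * (v p * (v q * stdphi v)) := by
  funext v
  unfold dotProduct mulVec dotProduct
  rw [Finset.mul_sum]
  refine Finset.sum_congr rfl fun p _ => ?_
  rw [Finset.mul_sum, Finset.mul_sum]
  exact Finset.sum_congr rfl fun q _ => by ring

lemma integrable_phi_quad (M : Matrix (Fin J) (Fin J) ℝ) :
    Integrable (fun v : Fin J → ℝ => stdphi v * (v ⬝ᵥ (M *ᵥ v))) := by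
  rw [phi_quad_expand]
  exact integrable_finset_sum _ fun p _ =>
    integrable_finset_sum _ fun q _ => (integrable_vpq_phi p q).const_mul (M p q)

lemma integral_phi_quad (M : Matrix (Fin J) (Fin J) ℝ) :
    ∫ v : Fin J → ℝ, stdphi v * (v ⬝ᵥ (M *ᵥ v)) = M.trace := by
  rw [phi_quad_expand, integral_finset_sum _ (fun p _ =>
    integrable_finset_sum _ fun q _ => (integrable_vpq_phi p q).const_mul (M p q))]
  have : ∀ p : Fin J, ∫ v : Fin J → ℝ, ∑ q, M p q * (v p * (v q * stdphi v))
      = M p p := by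
    intro p
    rw [integral_finset_sum _ (fun q _ => (integrable_vpq_phi p q).const_mul (M p q))]
    have : ∀ q : Fin J, ∫ v : Fin J → ℝ, M p q * (v p * (v q * stdphi v))
        = if p = q then M p q else 0 := by
      intro q
      rw [integral_const_mul, integral_vpq_phi]
      by_cases h : p = q <;> simp [h]
    simp only [this]
    simp
  simp only [this]
  rfl

end LinQuad

section Main

lemma gaussDensity_pos {ι : Type*} [Fintype ι] [DecidableEq ι]
    {m : ι → ℝ} {S : Matrix ι ι ℝ} (hS : 0 < S.det) (x : ι → ℝ) :
    0 < gaussDensity m S x := by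
  unfold gaussDensity
  have h1 : (0:ℝ) < 2 * Real.pi := by positivity
  positivity

lemma log_gaussDensity {n : ℕ} (πk : ℝ) (hπk : 0 < πk) {Ψ : Matrix (Fin n) (Fin n) ℝ}
    (hΨ : Ψ.PosDef) (y w : Fin n → ℝ) :
    Real.log (πk * gaussDensity w Ψ y)
      = Real.log πk + Real.log ((2 * Real.pi) ^ (-(n:ℝ)/2 : ℝ) * Ψ.det ^ (-(1:ℝ)/2 : ℝ))
        + (-(1/2) : ℝ) * ((y - w) ⬝ᵥ (Ψ⁻¹ *ᵥ (y - w))) := by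
  have hc : (0:ℝ) < (2 * Real.pi) ^ (-(n:ℝ)/2 : ℝ) * Ψ.det ^ (-(1:ℝ)/2 : ℝ) := by
    have h1 : (0:ℝ) < 2 * Real.pi := by positivity
    have := hΨ.det_pos
    positivity
  unfold gaussDensity
  rw [Fintype.card_fin]
  rw [Real.log_mul hπk.ne' (mul_pos hc (Real.exp_pos _)).ne',
    Real.log_mul hc.ne' (Real.exp_pos _).ne', Real.log_exp]
  ring

lemma estep_core {N n : ℕ} (m : Fin N → ℝ) {C : Matrix (Fin N) (Fin N) ℝ} (hC : C.PosDef)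
    (πk : ℝ) (hπk : 0 < πk) (σ : Fin n → Fin N) (y : Fin n → ℝ)
    {Ψ : Matrix (Fin n) (Fin n) ℝ} (hΨ : Ψ.PosDef) :
    Real.exp (∫ μ, Real.log (πk * gaussDensity (μ ∘ σ) Ψ y) ∂(gaussMeasure m C))
      = πk * gaussDensity (m ∘ σ) Ψ y *
          Real.exp (-(1/2 : ℝ) * ((C.submatrix σ σ) * Ψ⁻¹).trace) := by
  rw [gauss_cov hC m (fun μ => Real.log (πk * gaussDensity (μ ∘ σ) Ψ y))]
  set L := hC.posSemidef.sqrt with hLdef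
  have hLL : L * L = C := hC.posSemidef.sqrt_mul_self
  have hLsym : Lᵀ = L := by
    have h := hC.posSemidef.posSemidef_sqrt.1
    exact (by simpa using h : L.IsSymm)
  set R : Matrix (Fin n) (Fin N) ℝ := L.submatrix σ id with hRdef
  set a : Fin n → ℝ := y - m ∘ σ with hadef
  set d1 : Fin N → ℝ := a ᵥ* (Ψ⁻¹ * R) with hd1def
  set d2 : Fin N → ℝ := (Ψ⁻¹ *ᵥ a) ᵥ* R with hd2def
  set M : Matrix (Fin N) (Fin N) ℝ := Rᵀ * (Ψ⁻¹ * R) with hMdef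
  have hcomp : ∀ v : Fin N → ℝ, y - ((m + L *ᵥ v) ∘ σ) = a - R *ᵥ v := by
    intro v
    funext b
    simp only [hadef, hRdef, Pi.sub_apply, Function.comp_apply, Pi.add_apply,
      Matrix.mulVec, dotProduct, Matrix.submatrix_apply, id]
    ring
  have hq : ∀ v : Fin N → ℝ,
      (y - ((m + L *ᵥ v) ∘ σ)) ⬝ᵥ (Ψ⁻¹ *ᵥ (y - ((m + L *ᵥ v) ∘ σ)))
        = a ⬝ᵥ (Ψ⁻¹ *ᵥ a) - d1 ⬝ᵥ v - d2 ⬝ᵥ v + v ⬝ᵥ (M *ᵥ v) := by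
    intro v
    have t1 : a ⬝ᵥ (Ψ⁻¹ *ᵥ (R *ᵥ v)) = d1 ⬝ᵥ v := by
      rw [Matrix.mulVec_mulVec, Matrix.dotProduct_mulVec, hd1def]
    have t2 : (R *ᵥ v) ⬝ᵥ (Ψ⁻¹ *ᵥ a) = d2 ⬝ᵥ v := by
      rw [dotProduct_comm, Matrix.dotProduct_mulVec, hd2def]
    have t3 : (R *ᵥ v) ⬝ᵥ (Ψ⁻¹ *ᵥ (R *ᵥ v)) = v ⬝ᵥ (M *ᵥ v) := by
      rw [Matrix.mulVec_mulVec,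
        show R *ᵥ v = v ᵥ* Rᵀ from (Matrix.vecMul_transpose R v).symm,
        Matrix.dotProduct_mulVec, Matrix.vecMul_vecMul, ← Matrix.dotProduct_mulVec, hMdef]
    rw [hcomp v, Matrix.mulVec_sub, sub_dotProduct, dotProduct_sub,
      dotProduct_sub, t1, t2, t3]
    ring
  have hFv : ∀ v : Fin N → ℝ,
      Real.log (πk * gaussDensity (((m + L *ᵥ v) ∘ σ)) Ψ y)
        = Real.log (πk * gaussDensity (m ∘ σ) Ψ y)
          + (-(1/2) : ℝ) * (v ⬝ᵥ (M *ᵥ v) - d1 ⬝ᵥ v - d2 ⬝ᵥ v) := by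
    intro v
    rw [log_gaussDensity πk hπk hΨ y ((m + L *ᵥ v) ∘ σ),
      log_gaussDensity πk hπk hΨ y (m ∘ σ), hq v, ← hadef]
    ring
  set LC := Real.log (πk * gaussDensity (m ∘ σ) Ψ y) with hLCdef
  set c : Fin N → ℝ := ((1/2 : ℝ)) • (d1 + d2) with hcdef
  set M' : Matrix (Fin N) (Fin N) ℝ := ((-(1/2) : ℝ)) • M with hM'def
  have hintegrand : (fun v : Fin N → ℝ =>
        stdphi v * Real.log (πk * gaussDensity (((m + L *ᵥ v) ∘ σ)) Ψ y))
      = fun v => LC * stdphi v + (stdphi v * (c ⬝ᵥ v) + stdphi v * (v ⬝ᵥ (M' *ᵥ v))) := by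
    funext v
    rw [hFv v, hcdef, hM'def]
    simp only [smul_dotProduct, add_dotProduct, Matrix.smul_mulVec,
      dotProduct_smul, smul_eq_mul]
    ring
  have hadd : Integrable (fun v : Fin N → ℝ =>
      stdphi v * (c ⬝ᵥ v) + stdphi v * (v ⬝ᵥ (M' *ᵥ v))) :=
    (integrable_phi_dot c).add (integrable_phi_quad M')
  rw [hintegrand, integral_add (integrable_stdphi.const_mul LC) hadd,
    integral_add (integrable_phi_dot c) (integrable_phi_quad M'),
    integral_const_mul, integral_stdphi, integral_phi_dot, integral_phi_quad]
  have hRR : R * Rᵀ = C.submatrix σ σ := by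
    ext b c'
    rw [← hLL]
    simp only [Matrix.mul_apply, Matrix.transpose_apply, hRdef, Matrix.submatrix_apply, id]
    refine Finset.sum_congr rfl fun p _ => ?_
    congr 1
    exact congrFun (congrFun hLsym.symm (σ c')) p
  have htr : M'.trace = (-(1/2) : ℝ) * ((C.submatrix σ σ) * Ψ⁻¹).trace := by
    rw [hM'def, Matrix.trace_smul, smul_eq_mul]
    congr 1
    rw [hMdef, Matrix.trace_mul_comm, Matrix.mul_assoc, hRR, Matrix.trace_mul_comm]
  rw [mul_one, zero_add, htr, hLCdef, Real.exp_add, Real.exp_log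
    (mul_pos hπk (gaussDensity_pos hΨ.det_pos y))]

/-- E-step responsibilities: the exponentiated variational expectation of
`log (Real.pi_k N(y; μ∘σ, Ψ))` equals `Real.pi_k N(y; m̂_k∘σ, Ψ) exp(−(1/2) tr((Ĉ_k)_{σσ} Ψ⁻¹))`,
and consequently the normalized exponentiated expectations equal the responsibilities. -/
theorem e_step_responsibilities {N n K : ℕ} (hK : 1 ≤ K)
    (mhat : Fin K → Fin N → ℝ) (Chat : Fin K → Matrix (Fin N) (Fin N) ℝ)
    (hChat : ∀ k, (Chat k).PosDef)
    (π : Fin K → ℝ) (hπ : ∀ k, 0 < π k)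
    (σ : Fin n → Fin N) (hσ : Function.Injective σ)
    (y : Fin n → ℝ) (Ψ : Matrix (Fin n) (Fin n) ℝ) (hΨ : Ψ.PosDef) :
    (∀ k, Real.exp (∫ μ, Real.log (π k * gaussDensity (μ ∘ σ) Ψ y)
            ∂(gaussMeasure (mhat k) (Chat k)))
        = π k * gaussDensity (mhat k ∘ σ) Ψ y *
            Real.exp (-(1 / 2) * (((Chat k).submatrix σ σ) * Ψ⁻¹).trace)) ∧
    (∀ k, Real.exp (∫ μ, Real.log (π k * gaussDensity (μ ∘ σ) Ψ y)
            ∂(gaussMeasure (mhat k) (Chat k))) /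
          (∑ l, Real.exp (∫ μ, Real.log (π l * gaussDensity (μ ∘ σ) Ψ y)
            ∂(gaussMeasure (mhat l) (Chat l))))
        = π k * gaussDensity (mhat k ∘ σ) Ψ y *
            Real.exp (-(1 / 2) * (((Chat k).submatrix σ σ) * Ψ⁻¹).trace) /
          (∑ l, π l * gaussDensity (mhat l ∘ σ) Ψ y *
            Real.exp (-(1 / 2) * (((Chat l).submatrix σ σ) * Ψ⁻¹).trace))) := by
  refine ⟨fun k => estep_core (mhat k) (hChat k) (π k) (hπ k) σ y hΨ, fun k => ?_⟩
  rw [estep_core (mhat k) (hChat k) (π k) (hπ k) σ y hΨ]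
  congr 1
  exact Finset.sum_congr rfl fun l _ => estep_core (mhat l) (hChat l) (π l) (hπ l) σ y hΨ
end Main
end
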